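/- (Appendix Claim 5.) Let t ≥ 1 be an integer. For any two arrays X₁, X_{t+1} ∈ Σ_q^{n^{⊗d}}, it holds that I_{t𝟏}(X₁) ∩ I_{t𝟏}(X_{t+1}) ≠ ∅ if and only if there exist t − 1 arrays X₂, …, X_t ∈ Σ_q^{n^{⊗d}} such that I_{𝟏}(X_i) ∩ I_{𝟏}(X_{i+1}) ≠ ∅ for all 1 ≤ i ≤ t, where 𝟏 = (1, …, 1) is the all-one vector of length d. -/

import Mathlib

/-!
A `t`-insertion of `X` is the same as a superarray containing `X` as the subarray cut out by
increasing index maps, with `t i` extra hyperplanes along axis `i`. If `X` and `Y` of equal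
size are subarrays of `Z` with `t` extra hyperplanes per axis, delete along each axis a
hyperplane `c` of `Z` not used by `Y`, and replace `X` by a subarray `X₂` of `Z` that avoids
`c` and differs from `X` in at most one hyperplane per axis. Then `X` and `X₂` have a common
superarray with one extra hyperplane per axis, and induction on `t` applies to `X₂` and `Y`.
Conversely, superarrays of a common array amalgamate, one inserted hyperplane at a time, so a
chain of `t` one-step overlaps gives a common superarray with `t` extra hyperplanes per axis.
-/

/-- A `q`-ary `d`-dimensional array: a size vector `size : Fin d → ℕ` together with an
entry of the alphabet `Fin q` for every index tuple inside the box
`[size 0] × ⋯ × [size (d-1)]`. -/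
structure Arr (q d : ℕ) where
  size : Fin d → ℕ
  val : ∀ x : Fin d → ℕ, (∀ i, x i < size i) → Fin q

/-- The index map associated with inserting a hyperplane at position `k` along axis `i`:
coordinates below `k` stay put, the others are shifted up by one (so that position `k`
along axis `i` is the freshly inserted hyperplane). -/
def insIdx {d : ℕ} (i : Fin d) (k : ℕ) (x : Fin d → ℕ) : Fin d → ℕ :=
  fun j => if j = i then (if x i < k then x i else x i + 1) else x j

/-- `InsertsTo i A B`: the array `B` is obtained from the array `A` by a single
`x_i`-insertion, i.e. by inserting one `(d-1)`-dimensional hyperplane (with arbitrary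
entries) orthogonal to the `x_i`-axis. -/
def InsertsTo {q d : ℕ} (i : Fin d) (A B : Arr q d) : Prop :=
  (∀ j, B.size j = if j = i then A.size j + 1 else A.size j) ∧
  ∃ k ≤ A.size i, ∀ (x : Fin d → ℕ) (hx : ∀ j, x j < A.size j)
    (hx' : ∀ j, insIdx i k x j < B.size j),
    A.val x hx = B.val (insIdx i k x) hx'

/-- `DeletesTo i A B`: the array `B` is obtained from `A` by a single `x_i`-deletion,
the inverse operation of an `x_i`-insertion. -/
def DeletesTo {q d : ℕ} (i : Fin d) (A B : Arr q d) : Prop :=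
  InsertsTo i B A

/-- `Steps R t A B`: the array `B` is obtained from the array `A` by performing, for each
axis `i`, exactly `t i` operations of type `R i` (in some order). -/
inductive Steps {q d : ℕ} (R : Fin d → Arr q d → Arr q d → Prop) :
    (Fin d → ℕ) → Arr q d → Arr q d → Prop
  | refl (A : Arr q d) : Steps R 0 A A
  | step {t : Fin d → ℕ} {A B C : Arr q d} (i : Fin d) :
      R i A B → Steps R t B C → Steps R (t + Pi.single i 1) A C

/-- The deletion ball `D_t(X)`: all arrays obtainable from `X` by a `t`-deletion,
i.e. by `t i` `x_i`-deletions for each axis `i`. -/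
def delBall {q d : ℕ} (t : Fin d → ℕ) (X : Arr q d) : Set (Arr q d) :=
  {Y | Steps DeletesTo t X Y}

/-- The insertion ball `I_t(X)`: all arrays obtainable from `X` by a `t`-insertion,
i.e. by `t i` `x_i`-insertions for each axis `i`. -/
def insBall {q d : ℕ} (t : Fin d → ℕ) (X : Arr q d) : Set (Arr q d) :=
  {Y | Steps InsertsTo t X Y}

/-- The insertion-deletion ball `ID_t(X)`: all arrays obtainable from `X` by a
`t^del`-deletion followed by a `t^ins`-insertion, for some decomposition
`t = t^ins + t^del`. -/
def insDelBall {q d : ℕ} (t : Fin d → ℕ) (X : Arr q d) : Set (Arr q d) :=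
  {Z | ∃ tins tdel : Fin d → ℕ, tins + tdel = t ∧
    ∃ W ∈ delBall tdel X, Z ∈ insBall tins W}

/-- `Σ_q^{n^{⊗d}}`: the set of `q`-ary `d`-dimensional arrays of cubic size `n × ⋯ × n`. -/
def cube (q d n : ℕ) : Set (Arr q d) := {A | A.size = fun _ => n}

/-- A code `C` is a `t`-deletion-correcting code if the deletion balls `D_t(X)`, `X ∈ C`,
are pairwise disjoint. -/
def IsDelCode {q d : ℕ} (t : Fin d → ℕ) (C : Set (Arr q d)) : Prop :=
  ∀ X ∈ C, ∀ Y ∈ C, X ≠ Y → delBall t X ∩ delBall t Y = ∅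

/-- A code `C` is a `t`-insertion-correcting code if the insertion balls `I_t(X)`,
`X ∈ C`, are pairwise disjoint. -/
def IsInsCode {q d : ℕ} (t : Fin d → ℕ) (C : Set (Arr q d)) : Prop :=
  ∀ X ∈ C, ∀ Y ∈ C, X ≠ Y → insBall t X ∩ insBall t Y = ∅

/-- A code `C` is a `t`-insdel-correcting code if the insertion-deletion balls `ID_t(X)`,
`X ∈ C`, are pairwise disjoint. -/
def IsInsDelCode {q d : ℕ} (t : Fin d → ℕ) (C : Set (Arr q d)) : Prop :=
  ∀ X ∈ C, ∀ Y ∈ C, X ≠ Y → insDelBall t X ∩ insDelBall t Y = ∅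


namespace Arr

variable {q d : ℕ}

theorem ext' {A B : Arr q d} (hs : ∀ i, A.size i = B.size i)
    (hv : ∀ x hxA hxB, A.val x hxA = B.val x hxB) : A = B := by
  obtain ⟨sA, vA⟩ := A
  obtain ⟨sB, vB⟩ := B
  obtain rfl : sA = sB := funext hs
  congr
  funext x hx
  exact hv x hx hx

theorem val_congr (A : Arr q d) {x y : Fin d → ℕ} (hxy : x = y)
    (hx : ∀ i, x i < A.size i) (hy : ∀ i, y i < A.size i) :
    A.val x hx = A.val y hy := by
  subst hxy; rfl

end Arr

section Embedding

variable {q d : ℕ}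

structure IsEmbedding (f : Fin d → ℕ → ℕ) (A B : Arr q d) : Prop where
  strictMonoOn : ∀ i, StrictMonoOn (f i) (Set.Iio (A.size i))
  mapsTo : ∀ i, Set.MapsTo (f i) (Set.Iio (A.size i)) (Set.Iio (B.size i))
  val_eq : ∀ x hx hx', A.val x hx = B.val (fun j => f j (x j)) hx'

def Embeds (t : Fin d → ℕ) (A B : Arr q d) : Prop :=
  (∀ j, B.size j = A.size j + t j) ∧ ∃ f, IsEmbedding f A B

theorem isEmbedding_id (A : Arr q d) : IsEmbedding (fun _ => id) A A :=
  ⟨fun _ => strictMonoOn_id, fun _ => Set.mapsTo_id _, fun _ _ _ => rfl⟩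

theorem IsEmbedding.comp {f g : Fin d → ℕ → ℕ} {A B C : Arr q d}
    (hf : IsEmbedding f A B) (hg : IsEmbedding g B C) :
    IsEmbedding (fun i => g i ∘ f i) A C where
  strictMonoOn i := (hg.strictMonoOn i).comp (hf.strictMonoOn i) (hf.mapsTo i)
  mapsTo i := (hg.mapsTo i).comp (hf.mapsTo i)
  val_eq x hx _ := by
    rw [hf.val_eq x hx fun j => hf.mapsTo j (hx j)]
    exact hg.val_eq _ _ _

theorem Embeds.refl (A : Arr q d) : Embeds 0 A A :=
  ⟨fun _ => rfl, _, isEmbedding_id A⟩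

theorem Embeds.trans {s t : Fin d → ℕ} {A B C : Arr q d}
    (hAB : Embeds s A B) (hBC : Embeds t B C) : Embeds (s + t) A C := by
  obtain ⟨hs, f, hf⟩ := hAB
  obtain ⟨ht, g, hg⟩ := hBC
  exact ⟨fun j => by rw [ht, hs, Pi.add_apply, add_assoc], _, hf.comp hg⟩

theorem eqOn_of_strictMonoOn_of_mapsTo {n : ℕ} {S : Finset ℕ} (hS : S.card = n)
    {f g : ℕ → ℕ} (hf : StrictMonoOn f (Set.Iio n)) (hg : StrictMonoOn g (Set.Iio n))
    (hfS : Set.MapsTo f (Set.Iio n) S) (hgS : Set.MapsTo g (Set.Iio n) S) :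
    Set.EqOn f g (Set.Iio n) := by
  have key : ∀ φ : ℕ → ℕ, StrictMonoOn φ (Set.Iio n) → Set.MapsTo φ (Set.Iio n) S →
      (fun m : Fin n => φ m) = S.orderEmbOfFin hS := fun φ hφ hφS =>
    Finset.orderEmbOfFin_unique hS (fun m => hφS m.2) fun a b hab => hφ a.2 b.2 hab
  intro m hm
  exact congrFun ((key f hf hfS).trans (key g hg hgS).symm) ⟨m, hm⟩

theorem IsEmbedding.eqOn_id {f : Fin d → ℕ → ℕ} {A B : Arr q d} (hf : IsEmbedding f A B)
    {j : Fin d} (hj : B.size j = A.size j) : Set.EqOn (f j) id (Set.Iio (A.size j)) :=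
  eqOn_of_strictMonoOn_of_mapsTo (Finset.card_range _) (hf.strictMonoOn j) strictMonoOn_id
    (fun m hm => by simpa [← hj] using hf.mapsTo j hm) fun m hm => by simpa using hm

theorem Embeds.eq_of_zero {A B : Arr q d} (h : Embeds 0 A B) : A = B := by
  obtain ⟨hs, f, hf⟩ := h
  have hs' : ∀ j, B.size j = A.size j := fun j => by simpa using hs j
  refine Arr.ext' (fun j => (hs' j).symm) fun x hxA hxB => ?_
  rw [hf.val_eq x hxA fun j => hf.mapsTo j (hxA j)]
  exact B.val_congr (funext fun j => hf.eqOn_id (hs' j) (hxA j)) _ _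

end Embedding

namespace Finset

theorem nth_mem_of_lt_card {S : Finset ℕ} {m : ℕ} (hm : m < S.card) :
    Nat.nth (· ∈ S) m ∈ S :=
  Nat.nth_mem_of_lt_card S.finite_toSet (by simpa using hm)

theorem strictMonoOn_nth (S : Finset ℕ) :
    StrictMonoOn (Nat.nth (· ∈ S)) (Set.Iio S.card) := by
  simpa using Nat.nth_strictMonoOn S.finite_toSet

theorem count_lt_card {S : Finset ℕ} {v : ℕ} (hv : v ∈ S) : Nat.count (· ∈ S) v < S.card := by
  simpa using Nat.count_lt_card S.finite_toSet hv

end Finset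

section Restrict

open Finset

variable {q d : ℕ}

noncomputable def Arr.restrict (B : Arr q d) (S : Fin d → Finset ℕ)
    (hS : ∀ i, S i ⊆ range (B.size i)) : Arr q d where
  size i := (S i).card
  val x hx := B.val (fun i => Nat.nth (· ∈ S i) (x i)) fun i => by
    simpa using hS i (nth_mem_of_lt_card (hx i))

theorem isEmbedding_restrict (B : Arr q d) {S : Fin d → Finset ℕ}
    (hS : ∀ i, S i ⊆ range (B.size i)) :
    IsEmbedding (fun i => Nat.nth (· ∈ S i)) (B.restrict S hS) B where
  strictMonoOn i := strictMonoOn_nth (S i)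
  mapsTo i _ hm := by simpa using hS i (nth_mem_of_lt_card hm)
  val_eq _ _ _ := rfl

theorem IsEmbedding.restrict {f : Fin d → ℕ → ℕ} {A B : Arr q d} (hf : IsEmbedding f A B)
    {U : Fin d → Finset ℕ} (hU : ∀ i, U i ⊆ range (B.size i))
    (hfU : ∀ i, Set.MapsTo (f i) (Set.Iio (A.size i)) (U i)) :
    IsEmbedding (fun i m => Nat.count (· ∈ U i) (f i m)) A (B.restrict U hU) where
  strictMonoOn i _ ha _ hb hab := Nat.count_strict_mono (hfU i ha) (hf.strictMonoOn i ha hb hab)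
  mapsTo i _ hm := count_lt_card (hfU i hm)
  val_eq x hx _ := by
    rw [hf.val_eq x hx fun j => hf.mapsTo j (hx j)]
    exact B.val_congr (funext fun j => (Nat.nth_count (hfU j (hx j))).symm) _ _

theorem embeds_restrict {B : Arr q d} {S : Fin d → Finset ℕ} (hS : ∀ i, S i ⊆ range (B.size i))
    {t : Fin d → ℕ} (ht : ∀ i, B.size i = (S i).card + t i) : Embeds t (B.restrict S hS) B :=
  ⟨ht, _, isEmbedding_restrict B hS⟩

theorem embeds_restrict_of_subset {B : Arr q d} {H U : Fin d → Finset ℕ}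
    (hH : ∀ i, H i ⊆ range (B.size i)) (hU : ∀ i, U i ⊆ range (B.size i)) (hHU : ∀ i, H i ⊆ U i)
    {s : Fin d → ℕ} (hs : ∀ i, (U i).card = (H i).card + s i) :
    Embeds s (B.restrict H hH) (B.restrict U hU) :=
  ⟨hs, _, (isEmbedding_restrict B hH).restrict hU fun i _ hm => hHU i (nth_mem_of_lt_card hm)⟩

theorem Embeds.exists_image {t : Fin d → ℕ} {A B : Arr q d} (h : Embeds t A B) :
    ∃ S : Fin d → Finset ℕ, (∀ i, S i ⊆ range (B.size i)) ∧ (∀ i, (S i).card = A.size i) ∧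
      ∀ (U : Fin d → Finset ℕ) (hU : ∀ i, U i ⊆ range (B.size i)) (s : Fin d → ℕ),
        (∀ i, S i ⊆ U i) → (∀ i, (U i).card = A.size i + s i) →
        Embeds s A (B.restrict U hU) := by
  obtain ⟨-, f, hf⟩ := h
  refine ⟨fun i => (range (A.size i)).image (f i), fun i => ?_, fun i => ?_,
    fun U hU s hSU hs => ⟨hs, _, hf.restrict hU fun i m hm => hSU i ?_⟩⟩
  · intro v hv
    obtain ⟨m, hm, rfl⟩ := mem_image.mp hv
    simpa using hf.mapsTo i (by simpa using hm)
  · rw [card_image_of_injOn, card_range]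
    simpa using (hf.strictMonoOn i).injOn
  · exact mem_image_of_mem _ (by simpa using hm)

theorem Embeds.factor {s t : Fin d → ℕ} {A B : Arr q d} (h : Embeds (s + t) A B) :
    ∃ M, Embeds s A M ∧ Embeds t M B := by
  obtain ⟨S, hSB, hScard, hS⟩ := h.exists_image
  choose U hSU hUB hUcard using fun i => exists_subsuperset_card_eq (hSB i)
    (n := A.size i + s i) (by rw [hScard]; omega) (by simp [h.1 i])
  exact ⟨B.restrict U hUB, hS U hUB s hSU hUcard,
    embeds_restrict hUB fun i => by rw [hUcard, h.1 i, Pi.add_apply, add_assoc]⟩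

end Restrict

section Insertion

open Finset

variable {q d : ℕ}

theorem forall_size_eq_ite_iff {i : Fin d} {A B : Arr q d} :
    (∀ j, B.size j = if j = i then A.size j + 1 else A.size j) ↔
      ∀ j, B.size j = A.size j + (Pi.single i 1 : Fin d → ℕ) j := by
  refine forall_congr' fun j => ?_
  rw [Pi.single_apply]
  split_ifs <;> simp

theorem InsertsTo.embeds {i : Fin d} {A B : Arr q d} (h : InsertsTo i A B) :
    Embeds (Pi.single i 1) A B := by
  obtain ⟨hs, k, -, hval⟩ := h
  refine ⟨forall_size_eq_ite_iff.mp hs, fun j m => insIdx i k (fun _ => m) j, ?_, ?_, ?_⟩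
  · intro j a _ b _ hab
    simp only [insIdx]
    split_ifs <;> omega
  · intro j m hm
    simp only [Set.mem_Iio, insIdx, hs j] at hm ⊢
    split_ifs <;> omega
  · intro x hx hx'
    have hins : (fun j => insIdx i k (fun _ => x j) j) = insIdx i k x := by
      funext j
      by_cases hj : j = i
      · subst hj; simp [insIdx]
      · simp [insIdx, hj]
    rw [hval x hx (hins ▸ hx')]
    exact B.val_congr hins.symm _ _

theorem Embeds.insertsTo {i : Fin d} {A B : Arr q d} (h : Embeds (Pi.single i 1) A B) :
    InsertsTo i A B := by
  obtain ⟨hs, f, hf⟩ := h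
  have hs' := forall_size_eq_ite_iff.mpr hs
  have hBi : B.size i = A.size i + 1 := by simpa using hs' i
  obtain ⟨k, hkB, hkf⟩ : ∃ k ∈ range (B.size i), k ∉ (range (A.size i)).image (f i) :=
    exists_mem_notMem_of_card_lt_card (card_image_le.trans_lt (by simp [hBi]))
  have hfi : Set.EqOn (f i) (fun m => if m < k then m else m + 1) (Set.Iio (A.size i)) := by
    refine eqOn_of_strictMonoOn_of_mapsTo (S := (range (B.size i)).erase k)
      (by rw [card_erase_of_mem hkB, card_range, hBi, Nat.add_sub_cancel])
      (hf.strictMonoOn i) (fun a _ b _ hab => by split_ifs <;> omega)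
      (fun m hm => mem_erase.mpr ⟨?_, by simpa using hf.mapsTo i hm⟩) fun m hm => ?_
    · exact fun hfk => hkf (mem_image.mpr ⟨m, by simpa using hm, hfk⟩)
    · simp only [Set.mem_Iio, mem_range] at hm hkB
      simp only [coe_erase, coe_range, Set.mem_sdiff, Set.mem_Iio, Set.mem_singleton_iff]
      split_ifs <;> omega
  have hf_eq : ∀ x : Fin d → ℕ, (∀ j, x j < A.size j) → (fun j => f j (x j)) = insIdx i k x := by
    intro x hx
    funext j
    by_cases hj : j = i
    · subst hj; simpa [insIdx] using hfi (hx j)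
    · simpa [insIdx, hj] using hf.eqOn_id (by simpa [hj] using hs' j) (hx j)
  refine ⟨hs', k, by simpa [hBi] using hkB, fun x hx hx' => ?_⟩
  rw [hf.val_eq x hx fun j => hf.mapsTo j (hx j)]
  exact B.val_congr (hf_eq x hx) _ _

theorem Steps.append {R : Fin d → Arr q d → Arr q d → Prop} {t : Fin d → ℕ} {A B C : Arr q d}
    (h : Steps R t A B) {i : Fin d} (hBC : R i B C) : Steps R (t + Pi.single i 1) A C := by
  induction h with
  | refl A => simpa using Steps.step i hBC (Steps.refl C)
  | step j hR _ ih => simpa only [add_right_comm] using Steps.step j hR (ih hBC)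

theorem embeds_of_steps {t : Fin d → ℕ} {A B : Arr q d} (h : Steps InsertsTo t A B) :
    Embeds t A B := by
  induction h with
  | refl A => exact Embeds.refl A
  | step i hR _ ih => simpa only [add_comm] using hR.embeds.trans ih

theorem steps_of_embeds {t : Fin d → ℕ} {A B : Arr q d} (h : Embeds t A B) :
    Steps InsertsTo t A B := by
  generalize hN : ∑ i, t i = N
  induction N generalizing t B with
  | zero =>
    obtain rfl : t = 0 := funext fun i => sum_eq_zero_iff.mp hN i (mem_univ i)
    rw [h.eq_of_zero]
    exact .refl B
  | succ N ih =>
    obtain ⟨i, hi⟩ : ∃ i, t i ≠ 0 := by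
      by_contra! h0
      simp [h0] at hN
    have ht : t = (t - Pi.single i (1 : ℕ)) + Pi.single i 1 := by
      funext j
      by_cases hj : j = i
      · subst hj; simp; omega
      · simp [hj]
    have hsum : ∑ j, t j = ∑ j, (t - Pi.single i 1 : Fin d → ℕ) j + 1 := by
      conv_lhs => rw [ht]
      simp [sum_add_distrib]
    rw [ht] at h ⊢
    obtain ⟨M, hAM, hMB⟩ := h.factor
    exact (ih hAM (by omega)).append hMB.insertsTo

theorem mem_insBall_iff {t : Fin d → ℕ} {X Y : Arr q d} : Y ∈ insBall t X ↔ Embeds t X Y :=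
  ⟨embeds_of_steps, steps_of_embeds⟩

end Insertion

section Amalgamation

variable {q d : ℕ}

def delIdx (i : Fin d) (k : ℕ) (x : Fin d → ℕ) : Fin d → ℕ :=
  fun j => if j = i then (if x i < k then x i else x i - 1) else x j

theorem delIdx_insIdx (i : Fin d) (k : ℕ) (x : Fin d → ℕ) : delIdx i k (insIdx i k x) = x := by
  funext j
  by_cases hj : j = i
  · subst hj
    simp only [delIdx, insIdx, if_true]
    split_ifs <;> omega
  · simp [delIdx, insIdx, hj]

theorem insIdx_delIdx {i : Fin d} {k : ℕ} {x : Fin d → ℕ} (hx : x i ≠ k) :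
    insIdx i k (delIdx i k x) = x := by
  funext j
  by_cases hj : j = i
  · subst hj
    simp only [delIdx, insIdx, if_true]
    split_ifs <;> omega
  · simp [delIdx, insIdx, hj]

theorem insIdx_apply_self_ne (i : Fin d) (k : ℕ) (x : Fin d → ℕ) : insIdx i k x i ≠ k := by
  simp only [insIdx, if_true]
  split_ifs <;> omega

theorem delIdx_lt {i : Fin d} {k : ℕ} {s x : Fin d → ℕ} (hk : k ≤ s i)
    (hx : ∀ j, x j < if j = i then s j + 1 else s j) (hxk : x i ≠ k) (j : Fin d) :
    delIdx i k x j < s j := by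
  have := hx j
  by_cases hj : j = i
  · subst hj
    simp only [delIdx, if_true] at this ⊢
    split_ifs <;> omega
  · simpa [delIdx, hj] using this

def Arr.insertPlane (A : Arr q d) (i : Fin d) (k : ℕ) (hk : k ≤ A.size i)
    (P : (Fin d → ℕ) → Fin q) : Arr q d where
  size j := if j = i then A.size j + 1 else A.size j
  val z hz := if h : z i = k then P z else A.val (delIdx i k z) (delIdx_lt hk hz h)

theorem Arr.insertPlane_val_of_eq (A : Arr q d) {i : Fin d} {k : ℕ} (hk : k ≤ A.size i)
    (P : (Fin d → ℕ) → Fin q) {z : Fin d → ℕ} (hz : z i = k) (h) :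
    (A.insertPlane i k hk P).val z h = P z :=
  dif_pos hz

theorem Arr.insertPlane_val_of_ne (A : Arr q d) {i : Fin d} {k : ℕ} (hk : k ≤ A.size i)
    (P : (Fin d → ℕ) → Fin q) {z : Fin d → ℕ} (hz : z i ≠ k) (h) :
    (A.insertPlane i k hk P).val z h = A.val (delIdx i k z) (delIdx_lt hk h hz) :=
  dif_neg hz

theorem Arr.insertsTo_insertPlane (A : Arr q d) {i : Fin d} {k : ℕ} (hk : k ≤ A.size i)
    (P : (Fin d → ℕ) → Fin q) : InsertsTo i A (A.insertPlane i k hk P) := by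
  refine ⟨fun j => rfl, k, hk, fun x hx hx' => ?_⟩
  exact (A.insertPlane_val_of_ne hk P (insIdx_apply_self_ne i k x) _).trans
    (A.val_congr (delIdx_insIdx i k x) _ _) |>.symm

/-- The increasing map obtained from `φ` by inserting a new point `k` of the domain,
sent to `k'`. -/
def splice (φ : ℕ → ℕ) (k k' m : ℕ) : ℕ :=
  if m < k then φ m else if m = k then k' else φ (m - 1) + 1

section Splice

variable {φ : ℕ → ℕ} {n k k' : ℕ}

theorem StrictMonoOn.exists_splice_point (hφ : StrictMonoOn φ (Set.Iio n)) {N : ℕ}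
    (hφN : Set.MapsTo φ (Set.Iio n) (Set.Iio N)) (hk : k ≤ n) :
    ∃ k' ≤ N, (∀ m < k, φ m < k') ∧ ∀ m, k ≤ m → m < n → k' ≤ φ m := by
  rcases hk.lt_or_eq with hk | rfl
  · exact ⟨φ k, (hφN hk).le, fun m hm => hφ (hm.trans hk) hk hm,
      fun m hkm hm => (hφ.monotoneOn) hk hm hkm⟩
  · exact ⟨N, le_rfl, fun m hm => hφN hm, fun m h₁ h₂ => by omega⟩

theorem strictMonoOn_splice (hφ : StrictMonoOn φ (Set.Iio n)) (hk : k ≤ n)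
    (hbelow : ∀ m < k, φ m < k') (habove : ∀ m, k ≤ m → m < n → k' ≤ φ m) :
    StrictMonoOn (splice φ k k') (Set.Iio (n + 1)) := by
  intro a ha b hb hab
  simp only [Set.mem_Iio] at ha hb
  have hφ' : ∀ a b, a < b → b < n → φ a < φ b := fun a b hab hb =>
    hφ (hab.trans hb) hb hab
  have := hφ' a b
  have := hφ' (a - 1) (b - 1)
  have := hbelow a
  have := habove (b - 1)
  simp only [splice]
  split_ifs <;> omega

theorem mapsTo_splice {N : ℕ} (hφN : Set.MapsTo φ (Set.Iio n) (Set.Iio N)) (hk : k ≤ n)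
    (hk'N : k' ≤ N) :
    Set.MapsTo (splice φ k k') (Set.Iio (n + 1)) (Set.Iio (N + 1)) := by
  intro m hm
  have := @hφN m
  have := @hφN (m - 1)
  simp only [Set.mem_Iio, splice] at *
  split_ifs <;> omega

theorem splice_of_ne (hbelow : ∀ m < k, φ m < k') (habove : ∀ m, k ≤ m → m < n → k' ≤ φ m)
    {m : ℕ} (hm : m < n + 1) (hmk : m ≠ k) :
    splice φ k k' m ≠ k' ∧
      (if splice φ k k' m < k' then splice φ k k' m else splice φ k k' m - 1) =
        φ (if m < k then m else m - 1) := by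
  have := hbelow m
  have := habove (m - 1)
  simp only [splice]
  split_ifs <;> omega

end Splice

/-- `k'` is the position in `Z` matching the position `k` at which `B` extends `Y`. -/
theorem IsEmbedding.insertPlane {f : Fin d → ℕ → ℕ} {i : Fin d} {k k' : ℕ} {Y B Z : Arr q d}
    (hf : IsEmbedding f Y Z) (hBs : ∀ j, B.size j = if j = i then Y.size j + 1 else Y.size j)
    (hk : k ≤ Y.size i) (hBval : ∀ x hx hx', Y.val x hx = B.val (insIdx i k x) hx')
    (hk'Z : k' ≤ Z.size i) (hbelow : ∀ m < k, f i m < k')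
    (habove : ∀ m, k ≤ m → m < Y.size i → k' ≤ f i m) {P : (Fin d → ℕ) → Fin q}
    (hP : ∀ x hx, x i = k → P (fun j => if j = i then splice (f i) k k' (x j) else f j (x j)) =
      B.val x hx) :
    IsEmbedding (fun j m => if j = i then splice (f i) k k' m else f j m) B
      (Z.insertPlane i k' hk'Z P) := by
  refine ⟨fun j => ?_, fun j => ?_, fun x hx hx' => ?_⟩
  · by_cases hj : j = i
    · subst hj
      simpa [hBs] using strictMonoOn_splice (hf.strictMonoOn j) hk hbelow habove
    · simpa [hj, hBs] using hf.strictMonoOn j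
  · by_cases hj : j = i
    · subst hj
      simpa [hBs, Arr.insertPlane] using mapsTo_splice (hf.mapsTo j) hk hk'Z
    · simpa [hj, hBs, Arr.insertPlane] using hf.mapsTo j
  have hxY : ∀ j, x j < if j = i then Y.size j + 1 else Y.size j := fun j => hBs j ▸ hx j
  by_cases hxk : x i = k
  · rw [Z.insertPlane_val_of_eq hk'Z P (by simp [splice, hxk]), hP x hx hxk]
  obtain ⟨hFk, hFdel⟩ := splice_of_ne hbelow habove (by simpa using hxY i) hxk
  have hdel : delIdx i k' (fun j => if j = i then splice (f i) k k' (x j) else f j (x j)) =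
      fun j => f j (delIdx i k x j) := by
    funext j
    by_cases hj : j = i
    · subst hj; simpa [delIdx] using hFdel
    · simp [delIdx, hj]
  have hy := delIdx_lt hk hxY hxk
  calc B.val x hx = B.val (insIdx i k (delIdx i k x)) (by rwa [insIdx_delIdx hxk]) :=
        B.val_congr (insIdx_delIdx hxk).symm _ _
    _ = Y.val (delIdx i k x) hy := (hBval _ hy _).symm
    _ = Z.val (fun j => f j (delIdx i k x j)) _ := hf.val_eq _ hy fun j => hf.mapsTo j (hy j)
    _ = _ := (Z.val_congr hdel.symm _ _).trans
      (Z.insertPlane_val_of_ne hk'Z P (by simpa using hFk) _).symm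

theorem InsertsTo.amalgamate [NeZero q] {i : Fin d} {a : Fin d → ℕ} {Y B Z : Arr q d}
    (hYB : InsertsTo i Y B) (hYZ : Embeds a Y Z) :
    ∃ Z', InsertsTo i Z Z' ∧ Embeds a B Z' := by
  obtain ⟨hBs, k, hk, hBval⟩ := hYB
  obtain ⟨hZs, f, hf⟩ := hYZ
  obtain ⟨k', hk'Z, hbelow, habove⟩ :=
    (hf.strictMonoOn i).exists_splice_point (hf.mapsTo i) hk
  -- `g` recovers the index in `B` of a point of the new hyperplane of `Z`; the entries of that
  -- hyperplane off the image of `f` are arbitrary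
  let g : Fin d → ℕ → ℕ := fun j =>
    if j = i then fun _ => k else Function.invFunOn (f j) (Set.Iio (Y.size j))
  let P : (Fin d → ℕ) → Fin q := fun z => if h : ∀ j, g j (z j) < B.size j then B.val _ h else 0
  refine ⟨Z.insertPlane i k' hk'Z P, Z.insertsTo_insertPlane hk'Z P,
    fun j => by simp only [Arr.insertPlane, hBs j, hZs j]; split_ifs <;> omega, _,
    hf.insertPlane hBs hk hBval hk'Z hbelow habove fun x hx hxk => ?_⟩
  have hgF : ∀ j, g j (if j = i then splice (f i) k k' (x j) else f j (x j)) = x j := by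
    intro j
    by_cases hj : j = i
    · subst hj; simp [g, hxk]
    · simp only [g, hj, if_false]
      exact (hf.strictMonoOn j).injOn.leftInvOn_invFunOn (by simpa [hj, hBs] using hx j)
  simp only [P]
  rw [dif_pos fun j => (hgF j).symm ▸ hx j]
  exact B.val_congr (funext hgF) _ _

theorem Embeds.amalgamate [NeZero q] {a b : Fin d → ℕ} {Y Zl Zr : Arr q d}
    (hl : Embeds a Y Zl) (hr : Embeds b Y Zr) : ∃ V, Embeds b Zl V ∧ Embeds a Zr V := by
  have hsteps := steps_of_embeds hr
  clear hr
  induction hsteps generalizing Zl with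
  | refl => exact ⟨Zl, .refl Zl, hl⟩
  | step i hR _ ih =>
    obtain ⟨Z', hZZ', hBZ'⟩ := hR.amalgamate hl
    obtain ⟨V, hZ'V, hCV⟩ := ih hBZ'
    exact ⟨V, by simpa only [add_comm] using hZZ'.embeds.trans hZ'V, hCV⟩

end Amalgamation

section Chain

open Finset

variable {q d : ℕ}

theorem Finset.exists_exchange {N m : ℕ} {F G : Finset ℕ} (hF : F ⊆ range N) (hFc : F.card = m)
    (hGc : G.card = m) (hm : m < N) :
    ∃ c ∈ range N, c ∉ G ∧ ∃ H U : Finset ℕ, H ⊆ (range N).erase c ∧ H.card = m ∧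
      H ⊆ U ∧ F ⊆ U ∧ U ⊆ range N ∧ U.card = m + 1 := by
  obtain ⟨c, hcN, hcG⟩ := exists_mem_notMem_of_card_lt_card (s := G) (t := range N)
    (by simpa [hGc] using hm)
  obtain ⟨H, hFH, hHN, hHc⟩ := exists_subsuperset_card_eq (erase_subset_erase c hF) (n := m)
    (card_erase_le.trans hFc.le) (by rw [card_erase_of_mem hcN, card_range]; omega)
  have hFH' : F ⊆ insert c H := fun v hv => by
    by_cases hvc : v = c
    · exact hvc ▸ mem_insert_self c H
    · exact mem_insert_of_mem (hFH (mem_erase.mpr ⟨hvc, hv⟩))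
  obtain ⟨U, hHFU, hUN, hUc⟩ := exists_subsuperset_card_eq (s := H ∪ F) (t := range N)
    (n := m + 1) (union_subset (hHN.trans (erase_subset _ _)) hF)
    ((card_le_card (union_subset (subset_insert c H) hFH')).trans (hHc ▸ card_insert_le c H))
    (by simpa using hm)
  exact ⟨c, hcN, hcG, H, U, hHN, hHc, subset_union_left.trans hHFU,
    subset_union_right.trans hHFU, hUN, hUc⟩

theorem exists_chain_of_embeds {t : ℕ} {X Y Z : Arr q d} (hXY : X.size = Y.size)
    (hX : Embeds (fun _ => t) X Z) (hY : Embeds (fun _ => t) Y Z) :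
    ∃ C : ℕ → Arr q d, C 0 = X ∧ C t = Y ∧ (∀ i ≤ t, (C i).size = X.size) ∧
      ∀ i < t, ∃ W, Embeds (fun _ => 1) (C i) W ∧ Embeds (fun _ => 1) (C (i + 1)) W := by
  induction t generalizing X Z with
  | zero =>
    exact ⟨fun _ => X, rfl, hX.eq_of_zero.trans hY.eq_of_zero.symm, fun _ _ => rfl,
      fun i hi => absurd hi (Nat.not_lt_zero i)⟩
  | succ t ih =>
    obtain ⟨F, hFZ, hFc, hXsub⟩ := hX.exists_image
    obtain ⟨G, hGZ, hGc, hYsub⟩ := hY.exists_image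
    have hZ : ∀ i, Z.size i = X.size i + (t + 1) := hX.1
    -- `X` is exchanged for `X₂ = Z|H`, which avoids the hyperplanes `c i` unused by `Y`,
    -- so that `X₂` and `Y` both fit into `Z` with those hyperplanes deleted
    choose c hcZ hcG H U hHE hHc hHU hFU hUZ hUc using fun i =>
      exists_exchange (hFZ i) (hFc i) ((hGc i).trans (congrFun hXY i).symm)
        (by rw [hZ]; omega)
    have hE : ∀ i, (range (Z.size i)).erase (c i) ⊆ range (Z.size i) := fun i => erase_subset _ _
    have hEc : ∀ i, ((range (Z.size i)).erase (c i)).card = X.size i + t := fun i => by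
      rw [card_erase_of_mem (hcZ i), card_range, hZ]; omega
    let X₂ := Z.restrict H fun i => (hHE i).trans (hE i)
    have hX₂ : X₂.size = X.size := funext hHc
    obtain ⟨C, hC0, hCt, hCsize, hCadj⟩ := ih (hX₂.trans hXY)
      (embeds_restrict_of_subset _ hE hHE fun i => by rw [hEc, ← hHc])
      (hYsub _ hE _ (fun i v hv => mem_erase.mpr ⟨fun h => hcG i (h ▸ hv), hGZ i hv⟩)
        fun i => by rw [hEc, congrFun hXY])
    refine ⟨fun | 0 => X | i + 1 => C i, rfl, hCt, ?_, ?_⟩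
    · rintro (_ | i) hi
      exacts [rfl, (hCsize i (by omega)).trans hX₂]
    · rintro (_ | i) hi
      · refine ⟨Z.restrict U hUZ, hXsub U hUZ _ hFU hUc, ?_⟩
        show Embeds _ (C 0) _
        rw [hC0]
        exact embeds_restrict_of_subset _ hUZ hHU fun i => by rw [hUc, hHc]
      · exact hCadj i (by omega)

theorem embeds_of_chain [NeZero q] {s : Fin d → ℕ} {C : ℕ → Arr q d} {t : ℕ}
    (h : ∀ i < t, ∃ W, Embeds s (C i) W ∧ Embeds s (C (i + 1)) W) :
    ∃ V, Embeds (t • s) (C 0) V ∧ Embeds (t • s) (C t) V := by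
  induction t with
  | zero => exact ⟨C 0, by simpa using Embeds.refl (C 0), by simpa using Embeds.refl (C 0)⟩
  | succ t ih =>
    obtain ⟨V, hV0, hVt⟩ := ih fun i hi => h i (by omega)
    obtain ⟨W, hWt, hWt'⟩ := h t (by omega)
    obtain ⟨V', hVV', hWV'⟩ := hVt.amalgamate hWt
    rw [succ_nsmul]
    exact ⟨V', hV0.trans hVV', add_comm s _ ▸ hWt'.trans hWV'⟩

end Chain

theorem statement16_general (q d n t : ℕ) (hq : 2 ≤ q)
    (X₁ Xlast : Arr q d) (hX₁ : X₁ ∈ cube q d n) (hXlast : Xlast ∈ cube q d n) :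
    (insBall (fun _ => t) X₁ ∩ insBall (fun _ => t) Xlast).Nonempty ↔
    ∃ Z : ℕ → Arr q d, Z 1 = X₁ ∧ Z (t + 1) = Xlast ∧
      (∀ i, 2 ≤ i → i ≤ t → Z i ∈ cube q d n) ∧
      (∀ i, 1 ≤ i → i ≤ t →
        (insBall (fun _ => (1 : ℕ)) (Z i) ∩
          insBall (fun _ => (1 : ℕ)) (Z (i + 1))).Nonempty) := by
  have : NeZero q := ⟨by omega⟩
  simp only [Set.Nonempty, Set.mem_inter_iff, mem_insBall_iff]
  constructor
  · rintro ⟨V, h₁, h₂⟩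
    obtain ⟨C, hC0, hCt, hsize, hadj⟩ :=
      exists_chain_of_embeds ((hX₁ : X₁.size = _).trans hXlast.symm) h₁ h₂
    refine ⟨fun i => C (i - 1), hC0, hCt, fun i _ hi => (hsize _ (by omega)).trans hX₁,
      fun i h1 hi => ?_⟩
    obtain ⟨W, hW, hW'⟩ := hadj (i - 1) (by omega)
    rw [Nat.sub_add_cancel h1] at hW'
    exact ⟨W, hW, by simpa using hW'⟩
  · rintro ⟨Z, hZ1, hZt, -, hadj⟩
    obtain ⟨V, h₁, h₂⟩ := embeds_of_chain (C := fun i => Z (i + 1)) (s := fun _ => 1) (t := t)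
      fun i hi => hadj (i + 1) (by omega) (by omega)
    have hts : (t • fun _ : Fin d => (1 : ℕ)) = fun _ => t := by funext; simp
    rw [hts] at h₁ h₂
    exact ⟨V, hZ1 ▸ h₁, hZt ▸ h₂⟩

/-- **Appendix Claim 5.** For `t ≥ 1` and arrays `X₁, X_{t+1} ∈ Σ_q^{n^{⊗d}}`,
`I_{t𝟏}(X₁) ∩ I_{t𝟏}(X_{t+1}) ≠ ∅` iff there exist `t − 1` arrays
`X₂, …, X_t ∈ Σ_q^{n^{⊗d}}` with `I_𝟏(X_i) ∩ I_𝟏(X_{i+1}) ≠ ∅` for all `1 ≤ i ≤ t`. -/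
theorem statement16 (q d n t : ℕ) (hq : 2 ≤ q) (hd : 1 ≤ d) (ht : 1 ≤ t)
    (X₁ Xlast : Arr q d) (hX₁ : X₁ ∈ cube q d n) (hXlast : Xlast ∈ cube q d n) :
    (insBall (fun _ => t) X₁ ∩ insBall (fun _ => t) Xlast).Nonempty ↔
    ∃ Z : ℕ → Arr q d, Z 1 = X₁ ∧ Z (t + 1) = Xlast ∧
      (∀ i, 2 ≤ i → i ≤ t → Z i ∈ cube q d n) ∧
      (∀ i, 1 ≤ i → i ≤ t →
        (insBall (fun _ => (1 : ℕ)) (Z i) ∩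
          insBall (fun _ => (1 : ℕ)) (Z (i + 1))).Nonempty) :=
  statement16_general q d n t hq X₁ Xlast hX₁ hXlast
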